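/- Let 𝔫 be the 5-dimensional real Lie algebra l₅,₆ (case A) with orthonormal basis {E₁,…,E₅} and non-zero brackets [E₁,E₂] = m·E₃ + u·E₅, [E₁,E₃] = v·E₄ + w·E₅, [E₁,E₄] = x·E₅, [E₂,E₃] = y·E₅, where m, v, x, y are non-zero reals, u ∈ ℝ and w ≥ 0. Then there exist c ∈ ℝ and a derivation D of 𝔫 with Ric = c·Id + D if and only if u = 0, w = 0, m² = (3/2)x², v² = (3/2)x² and y² = x²; moreover, in that case necessarily c = −(11/4)x². -/

import Mathlib

/-!
Since `E₅` is central, a derivation `D = Ric - c Id` sends `[E₁, E₅] = 0` to `[E₁, D E₅] = 0`;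
as the `E₃`- and `E₄`-components of `Ric E₅` are `m u / 2` and `v w / 2`, this forces
`u = w = 0`. Then `Ric` is diagonal, and `D` is a derivation iff its eigenvalues add along the
four brackets: four linear equations in `c, m², v², x², y²`, whose solution is the stated one.
Conversely, the solution makes `D` a multiple of the grading in which `Eᵢ` has weight `i`.
-/

open scoped BigOperators

namespace Nilsoliton8

noncomputable section

abbrev V : Type := Fin 5 → ℝ

/-- The orthonormal basis vectors E₁,…,E₅ (indexed 0,…,4). -/
def E (i : Fin 5) : V := Pi.single i 1

/-- The inner product making `E` an orthonormal basis. -/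
def ip (x y : V) : ℝ := ∑ i, x i * y i

/-- `D` is a derivation of the bracket `br`. -/
def IsDerivation (br : V → V → V) (D : V →ₗ[ℝ] V) : Prop :=
  ∀ X Y : V, D (br X Y) = br (D X) Y + br X (D Y)

/-- `Ric` is the Ricci operator of the nilpotent Lie group with left-invariant
metric determined by the bracket `br` and the orthonormal basis `E`. -/
def IsRicci (br : V → V → V) (Ric : V →ₗ[ℝ] V) : Prop :=
  ∀ X Y : V, ip (Ric X) Y =
      -(1/2) * (∑ i : Fin 5, ip (br X (E i)) (br Y (E i)))
      + (1/4) * (∑ i : Fin 5, ∑ j : Fin 5, ip (br (E i) (E j)) X * ip (br (E i) (E j)) Y)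

/-- The bracket of l₅,₆ (case A): [E₁,E₂] = m·E₃ + u·E₅,
[E₁,E₃] = v·E₄ + w·E₅, [E₁,E₄] = x·E₅, [E₂,E₃] = y·E₅. -/
def br (m u v w x y : ℝ) (X Y : V) : V :=
  (m * (X 0 * Y 1 - X 1 * Y 0)) • E 2 + (v * (X 0 * Y 2 - X 2 * Y 0)) • E 3 + (u * (X 0 * Y 1 - X 1 * Y 0) + w * (X 0 * Y 2 - X 2 * Y 0) + x * (X 0 * Y 3 - X 3 * Y 0) + y * (X 1 * Y 2 - X 2 * Y 1)) • E 4

section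

variable {m u v w x y : ℝ} {Ric : V →ₗ[ℝ] V}

namespace IsRicci

lemma br_apply_zero (hRic : IsRicci (br m u v w x y) Ric) (X : V) :
    Ric X 0 = -(1/2)*(m^2+u^2+v^2+w^2+x^2)*X 0 - (w*y/2)*X 1 + (u*y/2)*X 2 := by
  have h := hRic X (E 0)
  simp [ip, br, E, Fin.sum_univ_five] at h
  linarith

lemma br_apply_one (hRic : IsRicci (br m u v w x y) Ric) (X : V) :
    Ric X 1 = -(w*y/2)*X 0 - (1/2)*(m^2+u^2+y^2)*X 1 - (u*w/2)*X 2 - (u*x/2)*X 3 := by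
  have h := hRic X (E 1)
  simp [ip, br, E, Fin.sum_univ_five] at h
  linarith

lemma br_apply_two (hRic : IsRicci (br m u v w x y) Ric) (X : V) :
    Ric X 2 = (u*y/2)*X 0 - (u*w/2)*X 1 + (1/2)*(m^2-v^2-w^2-y^2)*X 2 - (w*x/2)*X 3
      + (m*u/2)*X 4 := by
  have h := hRic X (E 2)
  simp [ip, br, E, Fin.sum_univ_five] at h
  linarith

lemma br_apply_three (hRic : IsRicci (br m u v w x y) Ric) (X : V) :
    Ric X 3 = -(u*x/2)*X 1 - (w*x/2)*X 2 + (1/2)*(v^2-x^2)*X 3 + (v*w/2)*X 4 := by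
  have h := hRic X (E 3)
  simp [ip, br, E, Fin.sum_univ_five] at h
  linarith

lemma br_apply_four (hRic : IsRicci (br m u v w x y) Ric) (X : V) :
    Ric X 4 = (m*u/2)*X 2 + (v*w/2)*X 3 + (1/2)*(u^2+w^2+x^2+y^2)*X 4 := by
  have h := hRic X (E 4)
  simp [ip, br, E, Fin.sum_univ_five] at h
  linarith

end IsRicci

lemma apply_eq_of_eq_smul_id_add {c : ℝ} {D : V →ₗ[ℝ] V}
    (hEq : Ric = c • LinearMap.id + D) (Z : V) (k : Fin 5) : D Z k = Ric Z k - c * Z k := by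
  simp [hEq]

lemma u_eq_zero_and_w_eq_zero_of_soliton (hm : m ≠ 0) (hv : v ≠ 0) (hx : x ≠ 0)
    (hRic : IsRicci (br m u v w x y) Ric) {c : ℝ} {D : V →ₗ[ℝ] V}
    (hD : IsDerivation (br m u v w x y) D) (hEq : Ric = c • LinearMap.id + D) :
    u = 0 ∧ w = 0 := by
  have hDE := apply_eq_of_eq_smul_id_add hEq
  have h3 := congrFun (hD (E 0) (E 4)) 3
  have h4 := congrFun (hD (E 0) (E 4)) 4
  simp [hDE, br, E, hRic.br_apply_two, hRic.br_apply_three] at h3 h4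
  have hu : u = 0 := by simpa [hm, hv] using h3
  subst hu
  exact ⟨rfl, by simpa [hx, hv] using h4⟩

lemma soliton_constants (hm : m ≠ 0) (hv : v ≠ 0) (hx : x ≠ 0) (hy : y ≠ 0)
    (hRic : IsRicci (br m 0 v 0 x y) Ric) {c : ℝ} {D : V →ₗ[ℝ] V}
    (hD : IsDerivation (br m 0 v 0 x y) D) (hEq : Ric = c • LinearMap.id + D) :
    m ^ 2 = (3/2) * x ^ 2 ∧ v ^ 2 = (3/2) * x ^ 2 ∧ y ^ 2 = x ^ 2 ∧ c = -(11/4) * x ^ 2 := by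
  have hDE := apply_eq_of_eq_smul_id_add hEq
  have e12 := congrFun (hD (E 0) (E 1)) 2
  have e13 := congrFun (hD (E 0) (E 2)) 3
  have e14 := congrFun (hD (E 0) (E 3)) 4
  have e23 := congrFun (hD (E 1) (E 2)) 4
  simp [hDE, br, E, hRic.br_apply_zero, hRic.br_apply_one, hRic.br_apply_two,
    hRic.br_apply_three, hRic.br_apply_four] at e12 e13 e14 e23
  -- `Ric`, hence `D`, is diagonal, and on `[Eᵢ, Eⱼ] = λ Eₖ`
  -- the derivation identity reads `λ (dₖ - dᵢ - dⱼ) = 0`.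
  have sum12 : 2*c + 3*m^2 + x^2 = 0 := mul_left_cancel₀ hm (by linear_combination 2 * e12)
  have sum13 : 2*c + 3*v^2 + y^2 = 0 := mul_left_cancel₀ hv (by linear_combination 2 * e13)
  have sum14 : 2*c + m^2 + 3*x^2 + y^2 = 0 := mul_left_cancel₀ hx (by linear_combination 2 * e14)
  have sum23 : 2*c + v^2 + x^2 + 3*y^2 = 0 := mul_left_cancel₀ hy (by linear_combination 2 * e23)
  exact ⟨by linarith, by linarith, by linarith, by linarith⟩

end

section

variable {m v x y : ℝ}

lemma isDerivation_smul_grading (t : ℝ) :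
    IsDerivation (br m 0 v 0 x y) (t • Matrix.toLin' (Matrix.diagonal ![1, 2, 3, 4, 5])) := by
  intro X Y
  funext k
  fin_cases k <;> simp [br, E, Matrix.mulVec_diagonal] <;> ring

lemma ricci_eq_of_soliton_constants {Ric : V →ₗ[ℝ] V} (hRic : IsRicci (br m 0 v 0 x y) Ric)
    (hmx : m ^ 2 = (3/2) * x ^ 2) (hvx : v ^ 2 = (3/2) * x ^ 2) (hyx : y ^ 2 = x ^ 2) :
    Ric = (-(11/4) * x ^ 2) • LinearMap.id
      + ((3/4) * x ^ 2) • Matrix.toLin' (Matrix.diagonal ![1, 2, 3, 4, 5]) := by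
  refine LinearMap.ext fun X => funext fun k => ?_
  fin_cases k <;> simp [Matrix.mulVec_diagonal]
  · rw [hRic.br_apply_zero]; linear_combination (-(1/2) * X 0) * (hmx + hvx)
  · rw [hRic.br_apply_one]; linear_combination (-(1/2) * X 1) * (hmx + hyx)
  · rw [hRic.br_apply_two]; linear_combination ((1/2) * X 2) * (hmx - hvx - hyx)
  · rw [hRic.br_apply_three]; linear_combination ((1/2) * X 3) * hvx
  · rw [hRic.br_apply_four]; linear_combination ((1/2) * X 4) * hyx

end

theorem stmt8_general (m u v w x y : ℝ) (hm : m ≠ 0) (hv : v ≠ 0) (hx : x ≠ 0) (hy : y ≠ 0)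
    (Ric : V →ₗ[ℝ] V) (hRic : IsRicci (br m u v w x y) Ric) :
    ((∃ (c : ℝ) (D : V →ₗ[ℝ] V), IsDerivation (br m u v w x y) D ∧
        Ric = c • (LinearMap.id : V →ₗ[ℝ] V) + D) ↔ (u = 0 ∧ w = 0 ∧ m ^ 2 = (3/2) * x ^ 2 ∧ v ^ 2 = (3/2) * x ^ 2 ∧ y ^ 2 = x ^ 2)) ∧
    (∀ (c : ℝ) (D : V →ₗ[ℝ] V), IsDerivation (br m u v w x y) D →
        Ric = c • (LinearMap.id : V →ₗ[ℝ] V) + D → c = -(11/4) * x ^ 2) := by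
  refine ⟨⟨?_, ?_⟩, ?_⟩
  · rintro ⟨c, D, hD, hEq⟩
    obtain ⟨rfl, rfl⟩ := u_eq_zero_and_w_eq_zero_of_soliton hm hv hx hRic hD hEq
    obtain ⟨hmx, hvx, hyx, -⟩ := soliton_constants hm hv hx hy hRic hD hEq
    exact ⟨rfl, rfl, hmx, hvx, hyx⟩
  · rintro ⟨rfl, rfl, hmx, hvx, hyx⟩
    exact ⟨_, _, isDerivation_smul_grading _, ricci_eq_of_soliton_constants hRic hmx hvx hyx⟩
  · intro c D hD hEq
    obtain ⟨rfl, rfl⟩ := u_eq_zero_and_w_eq_zero_of_soliton hm hv hx hRic hD hEq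
    exact (soliton_constants hm hv hx hy hRic hD hEq).2.2.2

theorem stmt8 (m u v w x y : ℝ) (hm : m ≠ 0) (hv : v ≠ 0) (hx : x ≠ 0) (hy : y ≠ 0) (hw : 0 ≤ w)
    (Ric : V →ₗ[ℝ] V) (hRic : IsRicci (br m u v w x y) Ric) :
    ((∃ (c : ℝ) (D : V →ₗ[ℝ] V), IsDerivation (br m u v w x y) D ∧
        Ric = c • (LinearMap.id : V →ₗ[ℝ] V) + D) ↔ (u = 0 ∧ w = 0 ∧ m ^ 2 = (3/2) * x ^ 2 ∧ v ^ 2 = (3/2) * x ^ 2 ∧ y ^ 2 = x ^ 2)) ∧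
    (∀ (c : ℝ) (D : V →ₗ[ℝ] V), IsDerivation (br m u v w x y) D →
        Ric = c • (LinearMap.id : V →ₗ[ℝ] V) + D → c = -(11/4) * x ^ 2) :=
  stmt8_general m u v w x y hm hv hx hy Ric hRic

end

end Nilsoliton8
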